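/- Consider the recursive Volterra system: fix real constants C ≥ 1 and L ≥ 0, a constant c ∈ ℂ with ‖c‖ ≤ C, and continuous functions w, ω : [0,∞) → ℂ with ‖w(τ)‖ ≤ C and ‖ω(τ)‖ ≤ C·e^{L·τ} for all τ ≥ 0; define continuous functions φ_k : [0,∞) → ℂ by φ_0(τ) = c, φ_1(τ) = ∫_0^τ (w(r)·φ_0(r) + ω(r)) dr, and for k ≥ 2, φ_k(τ) = ∫_0^τ (Σ_{i+j=k−2} (φ_i ∗ φ_j)(r) + w(r)·φ_{k−1}(r)) dr. Then there exist real constants C', M, K > 0 (depending only on C and L) such that ‖φ_k(τ)‖ ≤ C'·M^k·(τ^k/k!)·e^{L·τ} for all k ≥ 0 and τ ≥ 0; consequently, for every τ ≥ 0 the series Σ_{k=0}^∞ φ_k(τ) converges absolutely and ‖Σ_{k=0}^∞ φ_k(τ)‖ ≤ C'·e^{K·τ}. -/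

import Mathlib

/-!
Comparing with `τ ^ k / k! * e^{Lτ}` turns the Volterra system into a numerical recursion: the
convolution of `s ^ i / i!` with `s ^ j / j!` is `s ^ (i + j + 1) / (i + j + 1)!` (a Beta integral),
and since `L ≥ 0`, integrating `x ^ k / k! * e^{Lx}` over `[0, τ]` gives at most
`τ ^ (k + 1) / (k + 1)! * e^{Lτ}`. Hence `‖φ_k(τ)‖ ≤ a_k τ ^ k / k! e^{Lτ}` for every sequence
with `a_(n+2) ≥ ∑_{i+j=n} a_i a_j + C a_(n+1)`, a Motzkin-type recursion. The sequence
`C (2C) ^ k Cat_k` is such a majorant, because the Catalan numbers satisfy the quadratic part of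
the recursion with equality and are nondecreasing. Then `Cat_k ≤ 4 ^ k` gives `M = 8C`, and
summing against the exponential series gives `K = L + 8C`.
-/

open Finset intervalIntegral

section

-- `open Nat` stays inside this section: it would make `φ` denote `Nat.totient`.
open Nat

lemma hasDerivAt_pow_succ_div_factorial (n : ℕ) (s : ℝ) :
    HasDerivAt (fun s : ℝ => s ^ (n + 1) / (n + 1)!) (s ^ n / n !) s := by
  refine ((hasDerivAt_pow (n + 1) s).div_const ((n + 1)! : ℝ)).congr_deriv ?_
  rw [factorial_succ, add_tsub_cancel_right]
  push_cast
  field_simp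

lemma integral_pow_div_factorial (n : ℕ) (x : ℝ) :
    ∫ s in (0 : ℝ)..x, s ^ n / n ! = x ^ (n + 1) / (n + 1)! := by
  rw [integral_eq_sub_of_hasDerivAt (fun s _ => hasDerivAt_pow_succ_div_factorial n s)
    (Continuous.intervalIntegrable (by fun_prop) 0 x)]
  simp

lemma integral_pow_div_factorial_mul_sub_pow_div_factorial (i j : ℕ) (x : ℝ) :
    ∫ s in (0 : ℝ)..x, s ^ i / i ! * ((x - s) ^ j / j !) = x ^ (i + j + 1) / (i + j + 1)! := by
  induction j generalizing i with
  | zero => simpa using integral_pow_div_factorial i x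
  | succ j ih =>
    have hu : ∀ s ∈ Set.uIcc 0 x,
        HasDerivAt (fun s => (x - s) ^ (j + 1) / (j + 1)!) (-((x - s) ^ j / j !)) s := fun s _ => by
      refine ((hasDerivAt_pow_succ_div_factorial j (x - s)).comp s
        ((hasDerivAt_id s).const_sub x)).congr_deriv ?_
      ring
    have hv : ∀ s ∈ Set.uIcc 0 x,
        HasDerivAt (fun s : ℝ => s ^ (i + 1) / (i + 1)!) (s ^ i / i !) s :=
      fun s _ => hasDerivAt_pow_succ_div_factorial i s
    -- Integration by parts moves one power from `x - s` to `s`; both boundary terms vanish.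
    have parts := integral_mul_deriv_eq_deriv_mul hu hv
      (Continuous.intervalIntegrable (by fun_prop) 0 x)
      (Continuous.intervalIntegrable (by fun_prop) 0 x)
    simp only [sub_self, zero_pow (succ_ne_zero _), zero_div, zero_mul, mul_zero, sub_zero, neg_mul,
      integral_neg, sub_neg_eq_add, zero_add] at parts
    rw [show i + (j + 1) + 1 = i + 1 + j + 1 by ring, ← ih]
    calc _ = ∫ s in (0 : ℝ)..x, (x - s) ^ (j + 1) / (j + 1)! * (s ^ i / i !) :=
          integral_congr fun s _ => mul_comm _ _
      _ = _ := parts.trans (integral_congr fun s _ => mul_comm _ _)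

noncomputable def expMonomial (L : ℝ) (k : ℕ) (τ : ℝ) : ℝ :=
  τ ^ k / k ! * Real.exp (L * τ)

namespace expMonomial

variable (L : ℝ)

lemma zero (τ : ℝ) : expMonomial L 0 τ = Real.exp (L * τ) := by simp [expMonomial]

lemma nonneg (k : ℕ) {τ : ℝ} (hτ : 0 ≤ τ) : 0 ≤ expMonomial L k τ := by
  unfold expMonomial; positivity

@[fun_prop]
lemma continuous (k : ℕ) : Continuous (expMonomial L k) := by
  unfold expMonomial; fun_prop

lemma integral_mul_sub (i j : ℕ) (x : ℝ) :
    ∫ s in (0 : ℝ)..x, expMonomial L i s * expMonomial L j (x - s)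
      = expMonomial L (i + j + 1) x := by
  have hsplit : ∀ s, expMonomial L i s * expMonomial L j (x - s)
      = Real.exp (L * x) * (s ^ i / i ! * ((x - s) ^ j / j !)) := fun s => by
    rw [expMonomial, expMonomial, show L * x = L * s + L * (x - s) by ring, Real.exp_add]
    ring
  rw [integral_congr fun s _ => hsplit s, integral_const_mul,
    integral_pow_div_factorial_mul_sub_pow_div_factorial, expMonomial, mul_comm]

variable {L}

lemma integral_le (hL : 0 ≤ L) (k : ℕ) {τ : ℝ} (hτ : 0 ≤ τ) :
    ∫ x in (0 : ℝ)..τ, expMonomial L k x ≤ expMonomial L (k + 1) τ := by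
  calc ∫ x in (0 : ℝ)..τ, expMonomial L k x
      ≤ ∫ x in (0 : ℝ)..τ, x ^ k / k ! * Real.exp (L * τ) := by
        refine integral_mono_on hτ (Continuous.intervalIntegrable (by fun_prop) 0 τ)
          (Continuous.intervalIntegrable (by fun_prop) 0 τ) fun x hx => ?_
        have hx0 : 0 ≤ x := hx.1
        unfold expMonomial
        gcongr
        exact hx.2
    _ = expMonomial L (k + 1) τ := by
        rw [integral_mul_const, integral_pow_div_factorial, expMonomial]

variable {E : Type*} [NormedAddCommGroup E] [NormedSpace ℝ E]

lemma norm_integral_le (hL : 0 ≤ L) {f : ℝ → E} {A τ : ℝ} {k : ℕ} (hτ : 0 ≤ τ)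
    (hA : 0 ≤ A)
    (hf : ∀ x ∈ Set.Ioc 0 τ, ‖f x‖ ≤ A * expMonomial L k x) :
    ‖∫ x in (0 : ℝ)..τ, f x‖ ≤ A * expMonomial L (k + 1) τ :=
  calc ‖∫ x in (0 : ℝ)..τ, f x‖ ≤ ∫ x in (0 : ℝ)..τ, A * expMonomial L k x :=
        norm_integral_le_of_norm_le hτ (.of_forall hf)
          (Continuous.intervalIntegrable (by fun_prop) 0 τ)
    _ ≤ A * expMonomial L (k + 1) τ := by
        rw [integral_const_mul]
        exact mul_le_mul_of_nonneg_left (integral_le hL k hτ) hA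

lemma norm_integral_mul_sub_le {R : Type*} [NormedRing R] [NormedSpace ℝ R] {f g : ℝ → R}
    {a b x : ℝ} {i j : ℕ} (ha : 0 ≤ a) (hx : 0 ≤ x)
    (hf : ∀ s, 0 ≤ s → ‖f s‖ ≤ a * expMonomial L i s)
    (hg : ∀ s, 0 ≤ s → ‖g s‖ ≤ b * expMonomial L j s) :
    ‖∫ s in (0 : ℝ)..x, f s * g (x - s)‖ ≤ a * b * expMonomial L (i + j + 1) x :=
  calc ‖∫ s in (0 : ℝ)..x, f s * g (x - s)‖
      ≤ ∫ s in (0 : ℝ)..x, a * b * (expMonomial L i s * expMonomial L j (x - s)) := by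
        refine norm_integral_le_of_norm_le hx (.of_forall fun s hs => ?_)
          (Continuous.intervalIntegrable (by fun_prop) 0 x)
        have hxs : 0 ≤ x - s := sub_nonneg.2 hs.2
        calc ‖f s * g (x - s)‖ ≤ ‖f s‖ * ‖g (x - s)‖ := norm_mul_le _ _
          _ ≤ (a * expMonomial L i s) * (b * expMonomial L j (x - s)) :=
            mul_le_mul (hf s hs.1.le) (hg _ hxs) (norm_nonneg _)
              (mul_nonneg ha (nonneg L i hs.1.le))
          _ = _ := by ring
    _ = a * b * expMonomial L (i + j + 1) x := by rw [integral_const_mul, integral_mul_sub]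

end expMonomial

end

open expMonomial in
theorem norm_le_mul_expMonomial_of_volterra {R : Type*} [NormedRing R] [NormedSpace ℝ R]
    {C L : ℝ} (hL : 0 ≤ L) {c : R} {w ω : ℝ → R} (hwb : ∀ τ : ℝ, 0 ≤ τ → ‖w τ‖ ≤ C)
    (hωb : ∀ τ : ℝ, 0 ≤ τ → ‖ω τ‖ ≤ C * Real.exp (L * τ))
    {φ : ℕ → ℝ → R} (hφ0 : ∀ τ : ℝ, φ 0 τ = c)
    (hφ1 : ∀ τ : ℝ, φ 1 τ = ∫ x in (0 : ℝ)..τ, (w x * φ 0 x + ω x))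
    (hφk : ∀ k, 2 ≤ k → ∀ τ : ℝ, φ k τ
      = ∫ x in (0 : ℝ)..τ,
          ((∑ p ∈ antidiagonal (k - 2), ∫ s in (0 : ℝ)..x, φ p.1 s * φ p.2 (x - s))
            + w x * φ (k - 1) x))
    {a : ℕ → ℝ} (ha : ∀ k, 0 ≤ a k) (ha0 : ‖c‖ ≤ a 0) (ha1 : C * a 0 + C ≤ a 1)
    (ha_rec : ∀ n, ∑ p ∈ antidiagonal n, a p.1 * a p.2 + C * a (n + 1) ≤ a (n + 2))
    (k : ℕ) {τ : ℝ} (hτ : 0 ≤ τ) :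
    ‖φ k τ‖ ≤ a k * expMonomial L k τ := by
  have hC : 0 ≤ C := (norm_nonneg _).trans (hwb 0 le_rfl)
  induction k using Nat.strong_induction_on generalizing τ with
  | _ k ih =>
  match k, ih with
  | 0, _ =>
    rw [hφ0, zero]
    exact ha0.trans (le_mul_of_one_le_right (ha 0) (Real.one_le_exp (by positivity)))
  | 1, ih =>
    rw [hφ1]
    have hA : 0 ≤ C * a 0 + C := add_nonneg (mul_nonneg hC (ha 0)) hC
    refine (norm_integral_le (k := 0) hL hτ hA fun x hx => ?_).trans
      (mul_le_mul_of_nonneg_right ha1 (nonneg L 1 hτ))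
    calc ‖w x * φ 0 x + ω x‖ ≤ ‖w x‖ * ‖φ 0 x‖ + ‖ω x‖ :=
          norm_add_le_of_le (norm_mul_le _ _) le_rfl
      _ ≤ C * (a 0 * expMonomial L 0 x) + C * expMonomial L 0 x := by
        gcongr
        · exact hwb x hx.1.le
        · exact ih 0 one_pos hx.1.le
        · exact (hωb x hx.1.le).trans_eq (by rw [zero])
      _ = (C * a 0 + C) * expMonomial L 0 x := by ring
  | n + 2, ih =>
    rw [hφk (n + 2) le_add_self, add_tsub_cancel_right, show n + 2 - 1 = n + 1 from rfl]
    refine (norm_integral_le hL hτ ?_ fun x hx => ?_).trans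
      (mul_le_mul_of_nonneg_right (ha_rec n) (nonneg L _ hτ))
    · exact add_nonneg (sum_nonneg fun p _ => mul_nonneg (ha _) (ha _)) (mul_nonneg hC (ha _))
    have hconv : ∀ p ∈ antidiagonal n, ‖∫ s in (0 : ℝ)..x, φ p.1 s * φ p.2 (x - s)‖
        ≤ a p.1 * a p.2 * expMonomial L (n + 1) x := fun p hp => by
      rw [← mem_antidiagonal.1 hp]
      exact norm_integral_mul_sub_le (ha _) hx.1.le
        (fun s hs => ih _ (by linarith [mem_antidiagonal.1 hp]) hs)
        (fun s hs => ih _ (by linarith [mem_antidiagonal.1 hp]) hs)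
    calc _ ≤ ‖∑ p ∈ antidiagonal n, ∫ s in (0 : ℝ)..x, φ p.1 s * φ p.2 (x - s)‖
          + ‖w x‖ * ‖φ (n + 1) x‖ := norm_add_le_of_le le_rfl (norm_mul_le _ _)
      _ ≤ ∑ p ∈ antidiagonal n, a p.1 * a p.2 * expMonomial L (n + 1) x
          + C * (a (n + 1) * expMonomial L (n + 1) x) :=
        add_le_add ((norm_sum_le _ _).trans (sum_le_sum hconv))
          (mul_le_mul (hwb x hx.1.le) (ih _ (by omega) hx.1.le) (norm_nonneg _) hC)
      _ = _ := by rw [← sum_mul]; ring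

lemma catalan_le_catalan_succ (n : ℕ) : catalan n ≤ catalan (n + 1) := by
  rw [catalan_succ']
  calc catalan n = catalan 0 * catalan n := by rw [catalan_zero, one_mul]
    _ ≤ _ := single_le_sum (f := fun p : ℕ × ℕ => catalan p.1 * catalan p.2) (a := (0, n))
        (fun _ _ => Nat.zero_le _) (mem_antidiagonal.2 (zero_add n))

lemma catalan_le_four_pow (n : ℕ) : catalan n ≤ 4 ^ n :=
  calc catalan n ≤ (n + 1) * catalan n := Nat.le_mul_of_pos_left _ n.succ_pos
    _ = n.centralBinom := succ_mul_catalan_eq_centralBinom n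
    _ ≤ 4 ^ n := Nat.centralBinom_le_four_pow n

def catalanMajorant (C : ℝ) (k : ℕ) : ℝ := C * (2 * C) ^ k * catalan k

namespace catalanMajorant

variable {C : ℝ}

variable (C) in
lemma zero : catalanMajorant C 0 = C := by simp [catalanMajorant]

variable (C) in
lemma one : catalanMajorant C 1 = 2 * C ^ 2 := by
  rw [catalanMajorant, pow_one, catalan_one, Nat.cast_one]
  ring

lemma nonneg (hC : 0 ≤ C) (k : ℕ) : 0 ≤ catalanMajorant C k := by
  unfold catalanMajorant; positivity

lemma le_mul_pow (hC : 0 ≤ C) (k : ℕ) : catalanMajorant C k ≤ C * (8 * C) ^ k := by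
  have hcat : (catalan k : ℝ) ≤ 4 ^ k := by exact_mod_cast catalan_le_four_pow k
  calc catalanMajorant C k ≤ C * (2 * C) ^ k * 4 ^ k := by unfold catalanMajorant; gcongr
    _ = C * (8 * C) ^ k := by rw [mul_assoc, ← mul_pow]; ring

lemma sum_antidiagonal_mul_add_le (hC : 1 ≤ C) (n : ℕ) :
    ∑ p ∈ antidiagonal n, catalanMajorant C p.1 * catalanMajorant C p.2
      + C * catalanMajorant C (n + 1) ≤ catalanMajorant C (n + 2) := by
  have hsum : ∑ p ∈ antidiagonal n, catalanMajorant C p.1 * catalanMajorant C p.2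
      = C ^ 2 * (2 * C) ^ n * catalan (n + 1) := by
    rw [catalan_succ', Nat.cast_sum, mul_sum]
    refine sum_congr rfl fun p hp => ?_
    rw [catalanMajorant, catalanMajorant, ← mem_antidiagonal.1 hp, pow_add]
    push_cast
    ring
  have hmono : (catalan (n + 1) : ℝ) ≤ catalan (n + 2) := by
    exact_mod_cast catalan_le_catalan_succ (n + 1)
  rw [hsum, catalanMajorant, catalanMajorant]
  calc C ^ 2 * (2 * C) ^ n * catalan (n + 1) + C * (C * (2 * C) ^ (n + 1) * catalan (n + 1))
      = (C + 2 * C ^ 2) * (C * (2 * C) ^ n * catalan (n + 1)) := by ring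
    _ ≤ 4 * C ^ 2 * (C * (2 * C) ^ n * catalan (n + 2)) := by
      gcongr
      nlinarith
    _ = C * (2 * C) ^ (n + 2) * catalan (n + 2) := by ring

end catalanMajorant

open Nat in
lemma summable_norm_and_norm_tsum_le_mul_exp {E : Type*} [NormedAddCommGroup E] {f : ℕ → E}
    {A x : ℝ} (hf : ∀ k, ‖f k‖ ≤ A * (x ^ k / k !)) :
    Summable (fun k => ‖f k‖) ∧ ‖∑' k, f k‖ ≤ A * Real.exp x := by
  have hexp : Summable (fun k : ℕ => A * (x ^ k / k !)) :=
    (Real.summable_pow_div_factorial x).mul_left A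
  have hnorm : Summable (fun k => ‖f k‖) := hexp.of_nonneg_of_le (fun _ => norm_nonneg _) hf
  refine ⟨hnorm, ?_⟩
  calc ‖∑' k, f k‖ ≤ ∑' k, ‖f k‖ := norm_tsum_le_tsum_norm hnorm
    _ ≤ ∑' k : ℕ, A * (x ^ k / k !) := hnorm.tsum_le_tsum hf hexp
    _ = A * Real.exp x := by
      rw [tsum_mul_left, Real.exp_eq_exp_ℝ, NormedSpace.exp_eq_tsum_div]

theorem volterra_system_exponential_bound_general
    (C L : ℝ) (hC : 1 ≤ C) (hL : 0 ≤ L)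
    (c : ℂ) (hc : ‖c‖ ≤ C)
    (w ω : ℝ → ℂ)
    (hwb : ∀ τ : ℝ, 0 ≤ τ → ‖w τ‖ ≤ C)
    (hωb : ∀ τ : ℝ, 0 ≤ τ → ‖ω τ‖ ≤ C * Real.exp (L * τ))
    (φ : ℕ → ℝ → ℂ)
    (hφ0 : ∀ τ : ℝ, φ 0 τ = c)
    (hφ1 : ∀ τ : ℝ, φ 1 τ = ∫ x in (0 : ℝ)..τ, (w x * φ 0 x + ω x))
    (hφk : ∀ k, 2 ≤ k → ∀ τ : ℝ, φ k τ
      = ∫ x in (0 : ℝ)..τ,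
          ((∑ p ∈ Finset.HasAntidiagonal.antidiagonal (k - 2),
              ∫ s in (0 : ℝ)..x, φ p.1 s * φ p.2 (x - s))
            + w x * φ (k - 1) x)) :
    ∃ C' M K : ℝ, 0 < C' ∧ 0 < M ∧ 0 < K ∧
      (∀ k : ℕ, ∀ τ : ℝ, 0 ≤ τ →
        ‖φ k τ‖ ≤ C' * M ^ k * (τ ^ k / (Nat.factorial k : ℝ)) * Real.exp (L * τ)) ∧
      ∀ τ : ℝ, 0 ≤ τ →
        Summable (fun k => ‖φ k τ‖) ∧ ‖∑' k, φ k τ‖ ≤ C' * Real.exp (K * τ) := by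
  have hC0 : 0 ≤ C := zero_le_one.trans hC
  have hterm : ∀ k τ, 0 ≤ τ →
      ‖φ k τ‖ ≤ C * (8 * C) ^ k * (τ ^ k / (Nat.factorial k : ℝ)) * Real.exp (L * τ) := by
    intro k τ hτ
    have ha1 : C * catalanMajorant C 0 + C ≤ catalanMajorant C 1 := by
      rw [catalanMajorant.zero, catalanMajorant.one]
      nlinarith
    refine (norm_le_mul_expMonomial_of_volterra hL hwb hωb hφ0 hφ1 hφk
      (catalanMajorant.nonneg hC0) (hc.trans_eq (catalanMajorant.zero C).symm) ha1
      (catalanMajorant.sum_antidiagonal_mul_add_le hC) k hτ).trans ?_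
    rw [expMonomial, ← mul_assoc]
    gcongr
    exact catalanMajorant.le_mul_pow hC0 k
  refine ⟨C, 8 * C, L + 8 * C, by positivity, by positivity, by positivity, hterm,
    fun τ hτ => ?_⟩
  have hsum := summable_norm_and_norm_tsum_le_mul_exp (A := C * Real.exp (L * τ)) (x := 8 * C * τ)
    fun k => (hterm k τ hτ).trans_eq (by ring)
  rwa [mul_assoc, ← Real.exp_add, ← add_mul] at hsum

/-- Exponential-type estimate for the successive approximations: the terms `φ_k` of
the recursive Volterra system satisfy geometric-factorial bounds
`‖φ_k(τ)‖ ≤ C'·M^k·(τ^k/k!)·e^{Lτ}`, and consequently the series `Σ_k φ_k(τ)`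
converges absolutely with an exponential bound `C'·e^{Kτ}`. -/
theorem volterra_system_exponential_bound
    (C L : ℝ) (hC : 1 ≤ C) (hL : 0 ≤ L)
    (c : ℂ) (hc : ‖c‖ ≤ C)
    (w ω : ℝ → ℂ)
    (hwc : ContinuousOn w (Set.Ici 0)) (hωc : ContinuousOn ω (Set.Ici 0))
    (hwb : ∀ τ : ℝ, 0 ≤ τ → ‖w τ‖ ≤ C)
    (hωb : ∀ τ : ℝ, 0 ≤ τ → ‖ω τ‖ ≤ C * Real.exp (L * τ))
    (φ : ℕ → ℝ → ℂ) (hφc : ∀ k, ContinuousOn (φ k) (Set.Ici 0))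
    (hφ0 : ∀ τ : ℝ, φ 0 τ = c)
    (hφ1 : ∀ τ : ℝ, φ 1 τ = ∫ x in (0 : ℝ)..τ, (w x * φ 0 x + ω x))
    (hφk : ∀ k, 2 ≤ k → ∀ τ : ℝ, φ k τ
      = ∫ x in (0 : ℝ)..τ,
          ((∑ p ∈ Finset.HasAntidiagonal.antidiagonal (k - 2),
              ∫ s in (0 : ℝ)..x, φ p.1 s * φ p.2 (x - s))
            + w x * φ (k - 1) x)) :
    ∃ C' M K : ℝ, 0 < C' ∧ 0 < M ∧ 0 < K ∧
      (∀ k : ℕ, ∀ τ : ℝ, 0 ≤ τ →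
        ‖φ k τ‖ ≤ C' * M ^ k * (τ ^ k / (Nat.factorial k : ℝ)) * Real.exp (L * τ)) ∧
      ∀ τ : ℝ, 0 ≤ τ →
        Summable (fun k => ‖φ k τ‖) ∧ ‖∑' k, φ k τ‖ ≤ C' * Real.exp (K * τ) :=
  volterra_system_exponential_bound_general C L hC hL c hc w ω hwb hωb φ hφ0 hφ1 hφk
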